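/- Let f be a rational Herglotz–Nevanlinna function (or f = ∞) with μ < π̊(f) and τ > f(μ) in case f ≠ ∞, and ρ ∈ ℝ. Then f̂ := Θ(μ,τ,ρ,f) is a rational Herglotz–Nevanlinna function, ind f̂ = ind f + 1, and its associated polynomials are given by f̂↑(λ) = −ρ f↑(λ) + (λ − μ + τρ) f↓(λ) and f̂↓(λ) = −f↑(λ) + τ f↓(λ). -/

import Mathlib

open MeasureTheory Set

/-- A rational Herglotz–Nevanlinna function
`f(λ) = h₀λ + h + ∑_{k=1}^{d} δ_k/(h_k − λ)` with `h₀ ≥ 0`, `δ_k > 0` and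
strictly increasing poles `h₁ < ⋯ < h_d`. -/
structure RHN : Type where
  d : ℕ
  h0 : ℝ
  h : ℝ
  delta : Fin d → ℝ
  pole : Fin d → ℝ
  h0_nonneg : 0 ≤ h0
  delta_pos : ∀ k, 0 < delta k
  pole_strictMono : StrictMono pole

namespace RHN

/-- The value `f(x)`. -/
noncomputable def eval (f : RHN) (x : ℝ) : ℝ :=
  f.h0 * x + f.h + ∑ k, f.delta k / (f.pole k - x)

/-- The normalizing constant `h₀′`. -/
noncomputable def h0' (f : RHN) : ℝ := if 0 < f.h0 then 1 / f.h0 else 1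

/-- The polynomial `f↓(x) = h₀′ ∏ (h_k − x)` (as a function). -/
noncomputable def fdown (f : RHN) (x : ℝ) : ℝ := f.h0' * ∏ k, (f.pole k - x)

/-- The polynomial `f↑ = f ⬝ f↓` (as a function). -/
noncomputable def fup (f : RHN) (x : ℝ) : ℝ :=
  f.h0' * ((f.h0 * x + f.h) * ∏ k, (f.pole k - x)
    + ∑ k, f.delta k * ∏ j ∈ Finset.univ.erase k, (f.pole j - x))

/-- The index `ind f = deg f↑ + deg f↓`, i.e. `2d+1` if `h₀ > 0` and `2d` if `h₀ = 0`. -/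
noncomputable def index (f : RHN) : ℤ := 2 * f.d + (if 0 < f.h0 then 1 else 0)

/-- The smallest pole `π̊(f)` (equal to `+∞` when `f` has no poles). -/
noncomputable def mpole (f : RHN) : EReal :=
  if hd : 0 < f.d then ((f.pole ⟨0, hd⟩ : ℝ) : EReal) else (⊤ : EReal)

/-- `f` is a constant function (class `𝓡₀`). -/
def IsConst (f : RHN) : Prop := f.d = 0 ∧ f.h0 = 0

/-- The function `f + a`. -/
def addConst (f : RHN) (a : ℝ) : RHN := { f with h := f.h + a }

/-- `Π_f(x)`: the number of poles of `f` not exceeding `x`. -/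
noncomputable def poleCount (f : RHN) (x : ℝ) : ℕ := Nat.card {k : Fin f.d // f.pole k ≤ x}

end RHN

/-- A boundary coefficient: a rational Herglotz–Nevanlinna function, or `none` = `∞`
(the Dirichlet case). -/
abbrev BC := Option RHN

namespace BC

noncomputable def fup : BC → ℝ → ℝ
  | none => fun _ => -1
  | some f => f.fup

noncomputable def fdown : BC → ℝ → ℝ
  | none => fun _ => 0
  | some f => f.fdown

noncomputable def index : BC → ℤ
  | none => -1
  | some f => f.index

noncomputable def mpole : BC → EReal
  | none => (⊤ : EReal)
  | some f => f.mpole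

noncomputable def poleCount : BC → ℝ → ℕ
  | none => fun _ => 0
  | some f => f.poleCount

end BC

/-- `f↑′(x)f↓(x) − f↑(x)f↓′(x)`, the expression appearing in the norming constants
(it equals `f′(x)f↓²(x)` away from the poles). -/
noncomputable def wronskLike (f : BC) (x : ℝ) : ℝ :=
  deriv (BC.fup f) x * BC.fdown f x - BC.fup f x * deriv (BC.fdown f) x

/-- `s` is real-valued, belongs to `L²(0,π)` and has zero mean. -/
def AdmissibleS (s : ℝ → ℝ) : Prop :=
  MemLp s 2 (volume.restrict (Set.Icc 0 Real.pi)) ∧ (∫ x in (0:ℝ)..Real.pi, s x) = 0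

/-- `(y, w)` is a solution of `−(y^{[1]})′ − s y^{[1]} − s² y = λ y` on `[0,π]`, where
`w = y^{[1]} = y′ − s y` is the quasi-derivative; both `y` and `w` are absolutely
continuous, being integrals of integrable functions. -/
def IsSolution (s : ℝ → ℝ) (lam : ℝ) (y w : ℝ → ℝ) : Prop :=
  IntegrableOn (fun t => w t + s t * y t) (Set.Icc 0 Real.pi) ∧
  IntegrableOn (fun t => -(s t) * w t - (s t) ^ 2 * y t - lam * y t) (Set.Icc 0 Real.pi) ∧
  (∀ x ∈ Set.Icc 0 Real.pi, y x = y 0 + ∫ t in (0:ℝ)..x, (w t + s t * y t)) ∧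
  (∀ x ∈ Set.Icc 0 Real.pi,
    w x = w 0 + ∫ t in (0:ℝ)..x, (-(s t) * w t - (s t) ^ 2 * y t - lam * y t))

/-- `lam` is an eigenvalue of the boundary value problem `𝒫(s,f,F)`. -/
def IsEigenvalue (s : ℝ → ℝ) (f F : BC) (lam : ℝ) : Prop :=
  ∃ y w : ℝ → ℝ, IsSolution s lam y w ∧ (y 0 ≠ 0 ∨ w 0 ≠ 0) ∧
    BC.fdown f lam * w 0 + BC.fup f lam * y 0 = 0 ∧
    BC.fup F lam * y Real.pi - BC.fdown F lam * w Real.pi = 0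

/-- `lam 0 < lam 1 < ⋯` is the increasing enumeration of all eigenvalues of `𝒫(s,f,F)`. -/
def IsSpectrum (s : ℝ → ℝ) (f F : BC) (lam : ℕ → ℝ) : Prop :=
  StrictMono lam ∧ ∀ x : ℝ, IsEigenvalue s f F x ↔ ∃ n, lam n = x

/-- `gam` is the norming constant of `𝒫(s,f,F)` corresponding to the eigenvalue `lam`:
`γ = ∫₀^π φ² + (f↑′f↓ − f↑f↓′)(λ) + (1/β²)(F↑′F↓ − F↑F↓′)(λ)` where `φ` is the solution
with `φ(0) = f↓(λ)`, `φ^{[1]}(0) = −f↑(λ)`, `ψ` the solution with `ψ(π) = F↓(λ)`,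
`ψ^{[1]}(π) = F↑(λ)`, and `ψ = βφ`. -/
def IsNormingConstant (s : ℝ → ℝ) (f F : BC) (lam gam : ℝ) : Prop :=
  ∃ y w Y W : ℝ → ℝ, ∃ b : ℝ,
    IsSolution s lam y w ∧ y 0 = BC.fdown f lam ∧ w 0 = -(BC.fup f lam) ∧
    IsSolution s lam Y W ∧ Y Real.pi = BC.fdown F lam ∧ W Real.pi = BC.fup F lam ∧
    b ≠ 0 ∧ (∀ x ∈ Set.Icc 0 Real.pi, Y x = b * y x) ∧
    gam = (∫ x in (0:ℝ)..Real.pi, (y x) ^ 2) + wronskLike f lam + (1 / b ^ 2) * wronskLike F lam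

/-- `{lam n, gam n}` is the spectral data of `𝒫(s,f,F)`. -/
def IsSpectralData (s : ℝ → ℝ) (f F : BC) (lam gam : ℕ → ℝ) : Prop :=
  IsSpectrum s f F lam ∧ ∀ n, IsNormingConstant s f F (lam n) (gam n)

/-- `g = Θ(μ,τ,ρ,f)`, i.e. `g(λ) = (μ − λ)/(f(λ) − τ) + ρ`, with the conventions
`Θ(μ,τ,ρ,f) = ∞` if `f ≡ τ` and `Θ(μ,τ,ρ,∞) = ρ`. -/
def IsTheta (mu tau rho : ℝ) : BC → BC → Prop
  | none, some g => g.d = 0 ∧ g.h0 = 0 ∧ g.h = rho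
  | none, none => False
  | some f, none => ∀ x, f.eval x = tau
  | some f, some g => (¬ ∀ x, f.eval x = tau) ∧
      ∀ x, f.fdown x ≠ 0 → f.eval x ≠ tau → g.fdown x ≠ 0 →
        g.eval x = (mu - x) / (f.eval x - tau) + rho

/-- The common part of the transformations `T̂` and `T̃`: given the factorizing solution
`(v, w)` (with `w = v^{[1]}`) of the original equation at the value `Λ`, the transformed
potential is `st = s − 2v′/v + (2/π)ln(v(π)/v(0)) = −s − 2w/v + (2/π)ln(v(π)/v(0))`
(a.e. on `[0,π]`) and the transformed boundary coefficients are the indicated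
`Θ`-transforms of `f` and `F`. -/
def TransfCore (s : ℝ → ℝ) (f F : BC) (Lam : ℝ) (v w : ℝ → ℝ)
    (st : ℝ → ℝ) (ft Ft : BC) : Prop :=
  (∀ x ∈ Set.Icc 0 Real.pi, v x ≠ 0) ∧
  (∀ᵐ x ∂(volume : Measure ℝ), x ∈ Set.Icc 0 Real.pi →
    st x = -(s x) - 2 * w x / v x + (2 / Real.pi) * Real.log (v Real.pi / v 0)) ∧
  IsTheta Lam (-(w 0) / v 0) (-(w 0) / v 0 + (2 / Real.pi) * Real.log (v Real.pi / v 0)) f ft ∧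
  IsTheta Lam (w Real.pi / v Real.pi)
    (w Real.pi / v Real.pi - (2 / Real.pi) * Real.log (v Real.pi / v 0)) F Ft

/-- The shift `Λ` used in the transformation `T̂`: `Λ = λ₀` if `f, F ≠ ∞` and
`Λ = λ₀ − 2` otherwise. -/
def hatLam (f F : BC) (lam0 : ℝ) : ℝ := if f.isSome && F.isSome then lam0 else lam0 - 2

/-- `(st, ft, Ft) = T̂(s, f, F)`, where `lam0` is the smallest eigenvalue of `𝒫(s,f,F)`;
the factorizing solution is `v = φ(·,Λ)` if `f ≠ ∞` and `v = ψ(·,Λ)` if `f = ∞`. -/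
def IsHatT (s : ℝ → ℝ) (f F : BC) (lam0 : ℝ) (st : ℝ → ℝ) (ft Ft : BC) : Prop :=
  ∃ v w : ℝ → ℝ,
    IsSolution s (hatLam f F lam0) v w ∧
    (if f.isSome then
        v 0 = BC.fdown f (hatLam f F lam0) ∧ w 0 = -(BC.fup f (hatLam f F lam0))
      else
        v Real.pi = BC.fdown F (hatLam f F lam0) ∧ w Real.pi = BC.fup F (hatLam f F lam0)) ∧
    TransfCore s f F (hatLam f F lam0) v w st ft Ft

/-- `(st, ft, Ft) = T̃(μ, ν, s, f, F)`, where `lam0 = λ̊(s,f,F)` and `gam0 = γ̊(s,f,F)`;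
the three disjuncts correspond to the three pieces `S̃₁`, `S̃₂`, `S̃₃` of the domain `S̃`. -/
def IsTildeT (mu nu : ℝ) (s : ℝ → ℝ) (f F : BC) (lam0 gam0 : ℝ)
    (st : ℝ → ℝ) (ft Ft : BC) : Prop :=
  (mu < lam0 ∧ 0 < nu ∧
    ∃ Cy Cw Sy Sw : ℝ → ℝ, ∃ kap rho : ℝ,
      IsSolution s mu Cy Cw ∧ Cy 0 = 1 ∧ Cw 0 = 0 ∧
      IsSolution s mu Sy Sw ∧ Sy 0 = 0 ∧ Sw 0 = 1 ∧
      BC.fup F mu * Sy Real.pi - BC.fdown F mu * Sw Real.pi ≠ 0 ∧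
      kap = (BC.fup F mu * Cy Real.pi - BC.fdown F mu * Cw Real.pi) /
            (BC.fup F mu * Sy Real.pi - BC.fdown F mu * Sw Real.pi) ∧
      nu + BC.fdown f mu * (kap * BC.fdown f mu - BC.fup f mu) ≠ 0 ∧
      rho = (nu * kap + BC.fup f mu * (kap * BC.fdown f mu - BC.fup f mu)) /
            (nu + BC.fdown f mu * (kap * BC.fdown f mu - BC.fup f mu)) ∧
      TransfCore s f F mu (fun x => Cy x - rho * Sy x) (fun x => Cw x - rho * Sw x) st ft Ft) ∨
  ((∃ f' : RHN, f = some f' ∧ f'.IsConst) ∧ mu = lam0 ∧ nu = gam0 / 2 ∧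
    ∃ v w : ℝ → ℝ, IsSolution s (mu - 2) v w ∧
      v 0 = BC.fdown f (mu - 2) ∧ w 0 = -(BC.fup f (mu - 2)) ∧
      TransfCore s f F (mu - 2) v w st ft Ft) ∨
  ((∃ F' : RHN, F = some F' ∧ F'.IsConst) ∧ mu = lam0 ∧ nu = 2 * gam0 ∧
    ∃ v w : ℝ → ℝ, IsSolution s (mu - 2) v w ∧
      v Real.pi = BC.fdown F (mu - 2) ∧ w Real.pi = BC.fup F (mu - 2) ∧
      TransfCore s f F (mu - 2) v w st ft Ft)


/-!
Write `n = d + [h₀ > 0]`. On each of the intervals `(μ, h₁), (h₁, h₂), …, (h_{d-1}, h_d)`, and on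
`(h_d, ∞)` when `h₀ > 0`, the function `f` is continuous, starts below `τ` (at `μ`, or near `−∞`
just right of a pole) and tends to `+∞`; so `f = τ` has `n` solutions `μ < z₁ < ⋯ < z_n` interlacing
the poles. The polynomial `τ f↓ − f↑ = f↓ (τ − f)` has degree `n` and vanishes at all `z_k`, hence
equals `c ∏ (z_k − λ)`, where `c = 1` if `h₀ > 0` and `c = τ − h > 0` otherwise. Expanding
`(λ − μ) f↓(λ) / (c ∏ (z_k − λ))` into partial fractions writes `f̂ − ρ` in the form
`ĥ₀ λ + ĥ + ∑ δ̂_k / (z_k − λ)`, and `δ̂_k = (z_k − μ) / f′(z_k) > 0` because `f′ > 0`. Exactly one of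
`h₀`, `ĥ₀` is positive, which makes the index grow by one.
-/

open Polynomial Finset Filter Topology

namespace Polynomial

variable {K : Type*} [Field K] {n : ℕ}

theorem eq_of_natDegree_le_of_coeff_eq_of_eval_eq {p q : K[X]} {z : Fin n → K}
    (hz : Function.Injective z) (hp : p.natDegree ≤ n) (hq : q.natDegree ≤ n)
    (hcoeff : p.coeff n = q.coeff n) (heval : ∀ k, p.eval (z k) = q.eval (z k)) : p = q := by
  refine eq_of_degree_sub_lt_of_eval_index_eq (v := z) univ hz.injOn ?_ fun k _ => heval k
  refine (degree_lt_iff_coeff_zero _ _).2 fun m hm => ?_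
  rw [card_univ, Fintype.card_fin] at hm
  rcases hm.eq_or_lt with rfl | hm
  · rw [coeff_sub, hcoeff, sub_self]
  · exact coeff_eq_zero_of_natDegree_lt (((natDegree_sub_le _ _).trans (max_le hp hq)).trans_lt hm)

theorem natDegree_prod_C_sub_X_le {ι : Type*} (s : Finset ι) (a : ι → K) :
    (∏ i ∈ s, (C (a i) - X)).natDegree ≤ #s :=
  (natDegree_prod_le _ _).trans <| by
    simpa using Finset.sum_le_card_nsmul s _ 1 fun i _ => (natDegree_sub_le _ _).trans (by simp)

variable (z : Fin n → K)

theorem natDegree_prod_fin_C_sub_X_le : (∏ k, (C (z k) - X)).natDegree ≤ n := by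
  simpa using natDegree_prod_C_sub_X_le univ z

theorem coeff_prod_fin_C_sub_X : (∏ k, (C (z k) - X)).coeff n = (-1) ^ n := by
  simpa using coeff_prod_of_natDegree_le univ (fun k => C (z k) - X) 1
    fun k _ => (natDegree_sub_le _ _).trans (by simp)

theorem degree_sum_C_mul_prod_erase_C_sub_X_lt (δ : Fin n → K) :
    (∑ k, C (δ k) * ∏ j ∈ univ.erase k, (C (z j) - X)).degree < n := by
  refine (degree_sum_le _ _).trans_lt ((Finset.sup_lt_iff (WithBot.bot_lt_coe n)).2 fun k _ => ?_)
  refine degree_le_natDegree.trans_lt (WithBot.coe_lt_coe.2 ?_)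
  refine (natDegree_C_mul_le _ _).trans_lt <| (natDegree_prod_C_sub_X_le _ z).trans_lt <| by
    simpa [card_erase_of_mem] using k.pos

theorem eval_sum_C_mul_prod_erase_C_sub_X (δ : Fin n → K) (k : Fin n) :
    (∑ i, C (δ i) * ∏ j ∈ univ.erase i, (C (z j) - X)).eval (z k)
      = δ k * ∏ j ∈ univ.erase k, (z j - z k) := by
  rw [eval_finsetSum, Finset.sum_eq_single k]
  · simp [eval_prod]
  · intro i _ hik
    simp [eval_prod, Finset.prod_eq_zero (i := k) (mem_erase.2 ⟨Ne.symm hik, mem_univ k⟩)]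
  · simp

variable {z}

theorem exists_eq_linear_mul_prod_add_sum (hz : Function.Injective z) {p : K[X]}
    (hp : p.natDegree ≤ n + 1) :
    ∃ b : K, p = (C ((-1) ^ n * p.coeff (n + 1)) * X + C b) * ∏ k, (C (z k) - X)
      + ∑ k, C (p.eval (z k) / ∏ j ∈ univ.erase k, (z j - z k))
          * ∏ j ∈ univ.erase k, (C (z j) - X) := by
  set Q := ∏ k, (C (z k) - X)
  set a := (-1) ^ n * p.coeff (n + 1)
  have hsq : ((-1 : K) ^ n) ^ 2 = 1 := by rw [← pow_mul, mul_comm, pow_mul, neg_one_sq, one_pow]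
  set r := p - C a * (X * Q)
  have hr : r.natDegree ≤ n := by
    have hle : r.natDegree ≤ n + 1 := by
      refine (natDegree_sub_le _ _).trans (max_le hp ?_)
      refine (natDegree_C_mul_le _ _).trans (natDegree_mul_le.trans ?_)
      rw [natDegree_X]
      linarith [natDegree_prod_fin_C_sub_X_le z]
    refine natDegree_le_pred hle ?_
    rw [coeff_sub, coeff_C_mul, coeff_X_mul, coeff_prod_fin_C_sub_X]
    linear_combination (-p.coeff (n + 1)) * hsq
  set S := ∑ k, C (p.eval (z k) / ∏ j ∈ univ.erase k, (z j - z k))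
      * ∏ j ∈ univ.erase k, (C (z j) - X)
  have hS := degree_sum_C_mul_prod_erase_C_sub_X_lt z fun k =>
    p.eval (z k) / ∏ j ∈ univ.erase k, (z j - z k)
  refine ⟨(-1) ^ n * r.coeff n, ?_⟩
  suffices r - C ((-1) ^ n * r.coeff n) * Q = S by
    rw [← this]
    ring
  refine eq_of_natDegree_le_of_coeff_eq_of_eval_eq hz ?_ (natDegree_le_of_degree_le hS.le) ?_
    fun k => ?_
  · exact (natDegree_sub_le _ _).trans
      (max_le hr ((natDegree_C_mul_le _ _).trans (natDegree_prod_fin_C_sub_X_le z)))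
  · rw [coeff_eq_zero_of_degree_lt hS, coeff_sub, coeff_C_mul, coeff_prod_fin_C_sub_X]
    linear_combination (-r.coeff n) * hsq
  · have hne : ∏ j ∈ univ.erase k, (z j - z k) ≠ 0 :=
      prod_ne_zero_iff.2 fun j hj => sub_ne_zero.2 (hz.ne (ne_of_mem_erase hj))
    rw [eval_sum_C_mul_prod_erase_C_sub_X, div_mul_cancel₀ _ hne]
    simp [r, Q, eval_prod, Finset.prod_eq_zero (mem_univ k)]

end Polynomial

theorem hasDerivAt_prod_const_sub {ι : Type*} [DecidableEq ι] {s : Finset ι} (z : ι → ℝ) {k : ι}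
    (hk : k ∈ s) :
    HasDerivAt (fun x => ∏ j ∈ s, (z j - x)) (-∏ j ∈ s.erase k, (z j - z k)) (z k) := by
  have hrest : DifferentiableAt ℝ (fun x => ∏ j ∈ s.erase k, (z j - x)) (z k) := by fun_prop
  have h := ((hasDerivAt_id (z k)).const_sub (z k)).fun_mul hrest.hasDerivAt
  simp only [id, sub_self, zero_mul, add_zero, neg_one_mul] at h
  exact h.congr_of_eventuallyEq (Eventually.of_forall fun x => (mul_prod_erase s _ hk).symm)

namespace RHN

def const (a : ℝ) : RHN :=
  ⟨0, 0, a, Fin.elim0, Fin.elim0, le_rfl, fun k => k.elim0, fun k => k.elim0⟩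

@[simp] theorem index_const (a : ℝ) : (const a).index = 0 := by
  simp [const, index]

@[simp] theorem fdown_const (a x : ℝ) : (const a).fdown x = 1 := by
  change (if (0 : ℝ) < 0 then 1 / 0 else 1) * ∏ k : Fin 0, (k.elim0 - x) = 1
  simp

@[simp] theorem fup_const (a x : ℝ) : (const a).fup x = a := by
  change (if (0 : ℝ) < 0 then 1 / 0 else 1) * ((0 * x + a) * ∏ k : Fin 0, (k.elim0 - x)
    + ∑ k : Fin 0, k.elim0 * ∏ j ∈ univ.erase k, (Fin.elim0 j - x)) = a
  simp

variable (f : RHN)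

theorem h0_eq_zero_of_not_pos (hh : ¬0 < f.h0) : f.h0 = 0 :=
  le_antisymm (not_lt.1 hh) f.h0_nonneg

theorem h0'_pos : 0 < f.h0' := by
  unfold h0'
  split_ifs with hh
  exacts [one_div_pos.2 hh, one_pos]

theorem h0'_mul_h0 (hh : 0 < f.h0) : f.h0' * f.h0 = 1 := by
  rw [h0', if_pos hh, one_div_mul_cancel hh.ne']

theorem h0'_of_not_pos (hh : ¬0 < f.h0) : f.h0' = 1 := by
  rw [h0', if_neg hh]

theorem fdown_ne_zero {x : ℝ} (hx : ∀ j, f.pole j ≠ x) : f.fdown x ≠ 0 :=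
  mul_ne_zero f.h0'_pos.ne' (prod_ne_zero_iff.2 fun j _ => sub_ne_zero.2 (hx j))

theorem pole_ne_of_fdown_ne_zero {x : ℝ} (hx : f.fdown x ≠ 0) (j : Fin f.d) : f.pole j ≠ x :=
  fun hj => hx (by rw [fdown, prod_eq_zero (mem_univ j) (sub_eq_zero.2 hj), mul_zero])

theorem fup_eq_eval_mul_fdown {x : ℝ} (hx : ∀ j, f.pole j ≠ x) :
    f.fup x = f.eval x * f.fdown x := by
  have hsum : (∑ k, f.delta k / (f.pole k - x)) * ∏ j, (f.pole j - x)
      = ∑ k, f.delta k * ∏ j ∈ univ.erase k, (f.pole j - x) := by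
    rw [sum_mul]
    refine sum_congr rfl fun k _ => ?_
    rw [← mul_prod_erase _ _ (mem_univ k)]
    field_simp [sub_ne_zero.2 (hx k)]
  rw [fup, eval, fdown, ← hsum]
  ring

theorem h_le_eval (hh : ¬0 < f.h0) {x : ℝ} (hx : ∀ j, x < f.pole j) : f.h ≤ f.eval x := by
  have hsum : 0 ≤ ∑ j, f.delta j / (f.pole j - x) :=
    sum_nonneg fun j _ => (div_pos (f.delta_pos j) (sub_pos.2 (hx j))).le
  rw [eval, f.h0_eq_zero_of_not_pos hh]
  linarith

theorem hasDerivAt_eval {x : ℝ} (hx : ∀ j, f.pole j ≠ x) :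
    HasDerivAt f.eval (f.h0 + ∑ j, f.delta j / (f.pole j - x) ^ 2) x := by
  have hterm : ∀ j, HasDerivAt (fun y => f.delta j / (f.pole j - y))
      (f.delta j / (f.pole j - x) ^ 2) x := fun j => by
    simpa [div_eq_mul_inv] using
      (((hasDerivAt_id x).const_sub (f.pole j)).inv (sub_ne_zero.2 (hx j))).const_mul (f.delta j)
  have h := (((hasDerivAt_id x).const_mul f.h0).add_const f.h).fun_add
    (HasDerivAt.fun_sum (u := univ) fun j _ => hterm j)
  simp only [id, mul_one] at h
  exact h

theorem h0_add_sum_div_sq_pos (hf : 0 < f.d ∨ 0 < f.h0) {x : ℝ} (hx : ∀ j, f.pole j ≠ x) :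
    0 < f.h0 + ∑ j, f.delta j / (f.pole j - x) ^ 2 := by
  have hterm : ∀ j, 0 < f.delta j / (f.pole j - x) ^ 2 := fun j =>
    div_pos (f.delta_pos j) (sq_pos_of_ne_zero (sub_ne_zero.2 (hx j)))
  rcases hf with hd | hh
  · have : Nonempty (Fin f.d) := ⟨⟨0, hd⟩⟩
    linarith [f.h0_nonneg, sum_pos (fun j _ => hterm j) univ_nonempty]
  · linarith [sum_nonneg fun j (_ : j ∈ Finset.univ) => (hterm j).le]

theorem eval_eq_add_div (i : Fin f.d) (x : ℝ) :
    f.eval x = (f.h0 * x + f.h + ∑ j ∈ univ.erase i, f.delta j / (f.pole j - x))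
      + f.delta i / (f.pole i - x) := by
  rw [eval, ← add_sum_erase _ _ (mem_univ i)]
  ring

theorem continuousAt_eval_sub_div (i : Fin f.d) :
    ContinuousAt (fun x => f.h0 * x + f.h + ∑ j ∈ univ.erase i, f.delta j / (f.pole j - x))
      (f.pole i) := by
  refine ((continuousAt_const.mul continuousAt_id).add continuousAt_const).add
    (tendsto_finsetSum _ fun j hj => continuousAt_const.div (continuousAt_const.sub continuousAt_id) ?_)
  exact sub_ne_zero.2 (f.pole_strictMono.injective.ne (ne_of_mem_erase hj))

theorem tendsto_eval_nhdsLT_pole (i : Fin f.d) : Tendsto f.eval (𝓝[<] f.pole i) atTop := by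
  have hsub : Tendsto (fun x => f.pole i - x) (𝓝[<] f.pole i) (𝓝[>] 0) := by
    refine tendsto_nhdsWithin_iff.2
      ⟨?_, eventually_nhdsWithin_of_forall fun x hx => mem_Ioi.2 (sub_pos.2 hx)⟩
    exact ((continuous_sub_left _).tendsto' _ _ (sub_self _)).mono_left nhdsWithin_le_nhds
  have hpole : Tendsto (fun x => f.delta i / (f.pole i - x)) (𝓝[<] f.pole i) atTop := by
    simpa [div_eq_mul_inv] using (tendsto_inv_nhdsGT_zero.comp hsub).const_mul_atTop (f.delta_pos i)
  exact (((f.continuousAt_eval_sub_div i).tendsto.mono_left nhdsWithin_le_nhds).add_atTop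
    hpole).congr fun x => (f.eval_eq_add_div i x).symm

theorem tendsto_eval_nhdsGT_pole (i : Fin f.d) : Tendsto f.eval (𝓝[>] f.pole i) atBot := by
  have hsub : Tendsto (fun x => f.pole i - x) (𝓝[>] f.pole i) (𝓝[<] 0) := by
    refine tendsto_nhdsWithin_iff.2
      ⟨?_, eventually_nhdsWithin_of_forall fun x hx => mem_Iio.2 (sub_neg.2 hx)⟩
    exact ((continuous_sub_left _).tendsto' _ _ (sub_self _)).mono_left nhdsWithin_le_nhds
  have hpole : Tendsto (fun x => f.delta i / (f.pole i - x)) (𝓝[>] f.pole i) atBot := by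
    simpa [div_eq_mul_inv] using (tendsto_inv_nhdsLT_zero.comp hsub).const_mul_atBot (f.delta_pos i)
  exact (((f.continuousAt_eval_sub_div i).tendsto.mono_left nhdsWithin_le_nhds).add_atBot
    hpole).congr fun x => (f.eval_eq_add_div i x).symm

theorem tendsto_eval_atTop (hh : 0 < f.h0) : Tendsto f.eval atTop atTop := by
  have hsum : Tendsto (fun x => f.h + ∑ j, f.delta j / (f.pole j - x)) atTop (𝓝 (f.h + 0)) := by
    refine tendsto_const_nhds.add ?_
    simpa [sub_eq_add_neg] using tendsto_finsetSum univ fun j _ =>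
      (tendsto_const_nhds (x := f.delta j)).div_atBot
        (tendsto_atBot_add_const_left _ _ tendsto_neg_atTop_atBot)
  exact ((tendsto_id.const_mul_atTop hh).atTop_add hsum).congr fun x => by
    rw [eval, add_assoc, id]

def InGap (k : ℕ) (x : ℝ) : Prop :=
  ∀ j : Fin f.d, ((j : ℕ) < k → f.pole j < x) ∧ (k ≤ j → x < f.pole j)

variable {f}

theorem InGap.pole_ne {k : ℕ} {x : ℝ} (hx : f.InGap k x) (j : Fin f.d) : f.pole j ≠ x := by
  rcases lt_or_ge (j : ℕ) k with hj | hj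
  · exact ((hx j).1 hj).ne
  · exact ((hx j).2 hj).ne'

theorem InGap.of_le_of_le {k : ℕ} {a b x : ℝ} (ha : f.InGap k a) (hb : f.InGap k b)
    (hax : a ≤ x) (hxb : x ≤ b) : f.InGap k x := fun j =>
  ⟨fun hj => ((ha j).1 hj).trans_le hax, fun hj => hxb.trans_lt ((hb j).2 hj)⟩

theorem InGap.lt {k l : ℕ} {x y : ℝ} (hx : f.InGap k x) (hy : f.InGap l y) (hkl : k < l)
    (hk : k < f.d) : x < y :=
  ((hx ⟨k, hk⟩).2 le_rfl).trans ((hy ⟨k, hk⟩).1 hkl)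

theorem inGap_zero_of_coe_lt_mpole {x : ℝ} (hx : (x : EReal) < f.mpole) : f.InGap 0 x := by
  intro j
  refine ⟨fun hj => absurd hj (Nat.not_lt_zero _), fun _ => ?_⟩
  have hd : 0 < f.d := j.pos
  rw [mpole, dif_pos hd, EReal.coe_lt_coe_iff] at hx
  exact hx.trans_le (f.pole_strictMono.monotone (show (⟨0, hd⟩ : Fin f.d) ≤ j from Nat.zero_le _))

variable (f)

theorem eventually_inGap_nhdsLT (i : Fin f.d) : ∀ᶠ x in 𝓝[<] f.pole i, f.InGap i x := by
  refine eventually_all.2 fun j => ?_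
  rcases lt_or_ge j i with hj | hj
  · filter_upwards [eventually_nhdsWithin_of_eventually_nhds
      (eventually_gt_nhds (f.pole_strictMono hj))] with x hx
    exact ⟨fun _ => hx, fun h => absurd h (not_le.2 hj)⟩
  · filter_upwards [self_mem_nhdsWithin] with x (hx : x < f.pole i)
    exact ⟨fun h => absurd hj (not_le.2 h), fun _ => hx.trans_le (f.pole_strictMono.monotone hj)⟩

theorem eventually_inGap_nhdsGT (i : Fin f.d) : ∀ᶠ x in 𝓝[>] f.pole i, f.InGap (i + 1) x := by
  refine eventually_all.2 fun j => ?_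
  rcases le_or_gt j i with hj | hj
  · filter_upwards [self_mem_nhdsWithin] with x (hx : f.pole i < x)
    exact ⟨fun _ => (f.pole_strictMono.monotone hj).trans_lt hx,
      fun h => absurd h (not_le.2 (Nat.lt_succ_of_le hj))⟩
  · filter_upwards [eventually_nhdsWithin_of_eventually_nhds
      (eventually_lt_nhds (f.pole_strictMono hj))] with x hx
    exact ⟨fun h => absurd hj (not_lt.2 (Nat.le_of_lt_succ h)), fun _ => hx⟩

theorem exists_inGap_eval_lt {μ τ : ℝ} (hμ : f.InGap 0 μ) (hμτ : f.eval μ < τ) {k : ℕ}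
    (hk : k ≤ f.d) : ∃ a, μ ≤ a ∧ f.InGap k a ∧ f.eval a < τ := by
  rcases k with _ | i
  · exact ⟨μ, le_rfl, hμ, hμτ⟩
  · have hi : i < f.d := hk
    obtain ⟨a, ⟨haτ, ha⟩, hia⟩ := ((((f.tendsto_eval_nhdsGT_pole ⟨i, hi⟩).eventually_lt_atBot τ).and
      (f.eventually_inGap_nhdsGT ⟨i, hi⟩)).and self_mem_nhdsWithin).exists
    exact ⟨a, ((hμ ⟨i, hi⟩).2 (Nat.zero_le _)).le.trans (le_of_lt hia), ha, haτ⟩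

theorem exists_inGap_lt_eval (τ : ℝ) {k : ℕ} (hk : k < f.d ∨ 0 < f.h0) {a : ℝ}
    (ha : f.InGap k a) : ∃ b, a < b ∧ f.InGap k b ∧ τ < f.eval b := by
  by_cases hkd : k < f.d
  · obtain ⟨b, ⟨hτb, hb⟩, hab⟩ := ((((f.tendsto_eval_nhdsLT_pole ⟨k, hkd⟩).eventually_gt_atTop τ).and
      (f.eventually_inGap_nhdsLT ⟨k, hkd⟩)).and (eventually_nhdsWithin_of_eventually_nhds
        (eventually_gt_nhds ((ha ⟨k, hkd⟩).2 le_rfl)))).exists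
    exact ⟨b, hab, hb, hτb⟩
  · obtain ⟨b, hτb, hab⟩ := (((f.tendsto_eval_atTop (hk.resolve_left hkd)).eventually_gt_atTop τ).and
      (eventually_gt_atTop a)).exists
    refine ⟨b, hab, fun j => ⟨fun hj => ((ha j).1 hj).trans hab, fun hj => ?_⟩, hτb⟩
    exact absurd (j.isLt.trans_le (not_lt.1 hkd)) (not_lt.2 hj)

theorem exists_inGap_eval_eq {μ τ : ℝ} (hμ : f.InGap 0 μ) (hμτ : f.eval μ < τ) {k : ℕ}
    (hkd : k ≤ f.d) (hk : k < f.d ∨ 0 < f.h0) : ∃ z, μ < z ∧ f.InGap k z ∧ f.eval z = τ := by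
  obtain ⟨a, hμa, ha, haτ⟩ := f.exists_inGap_eval_lt hμ hμτ hkd
  obtain ⟨b, hab, hb, hτb⟩ := f.exists_inGap_lt_eval τ hk ha
  have hcont : ContinuousOn f.eval (Icc a b) := fun x hx =>
    (f.hasDerivAt_eval (ha.of_le_of_le hb hx.1 hx.2).pole_ne).continuousAt.continuousWithinAt
  obtain ⟨z, hz, hzτ⟩ := intermediate_value_Ioo hab.le hcont ⟨haτ, hτb⟩
  exact ⟨z, hμa.trans_lt hz.1, ha.of_le_of_le hb hz.1.le hz.2.le, hzτ⟩

theorem exists_strictMono_inGap_roots {μ τ : ℝ} (hμ : f.InGap 0 μ) (hτ : f.eval μ < τ) {n : ℕ}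
    (hn : n = f.d + if 0 < f.h0 then 1 else 0) :
    ∃ z : Fin n → ℝ, StrictMono z ∧ ∀ k, μ < z k ∧ f.InGap k (z k) ∧ f.eval (z k) = τ := by
  have hnd : n ≤ f.d + 1 := by split_ifs at hn <;> omega
  have hk : ∀ k : Fin n, (k : ℕ) < f.d ∨ 0 < f.h0 := fun k => by
    by_cases hh : 0 < f.h0
    · exact Or.inr hh
    · rw [if_neg hh] at hn
      exact Or.inl (by omega)
  choose z hz using fun k : Fin n => f.exists_inGap_eval_eq hμ hτ (by omega) (hk k)
  exact ⟨z, fun a b hab => (hz a).2.1.lt (hz b).2.1 hab (by omega), hz⟩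

noncomputable def downPoly : ℝ[X] := C f.h0' * ∏ k, (C (f.pole k) - X)

noncomputable def upPoly : ℝ[X] :=
  C f.h0' * ((C f.h0 * X + C f.h) * ∏ k, (C (f.pole k) - X)
    + ∑ k, C (f.delta k) * ∏ j ∈ univ.erase k, (C (f.pole j) - X))

@[simp] theorem eval_downPoly (x : ℝ) : f.downPoly.eval x = f.fdown x := by
  simp [downPoly, fdown, eval_prod]

@[simp] theorem eval_upPoly (x : ℝ) : f.upPoly.eval x = f.fup x := by
  simp [upPoly, fup, eval_prod, eval_finsetSum]

theorem natDegree_downPoly_le : f.downPoly.natDegree ≤ f.d :=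
  (natDegree_C_mul_le _ _).trans (natDegree_prod_fin_C_sub_X_le f.pole)

theorem coeff_downPoly : f.downPoly.coeff f.d = f.h0' * (-1) ^ f.d := by
  rw [downPoly, coeff_C_mul, coeff_prod_fin_C_sub_X]

theorem C_mul_downPoly_sub_upPoly (τ : ℝ) :
    C τ * f.downPoly - f.upPoly = C f.h0' * (C (τ - f.h) * ∏ k, (C (f.pole k) - X)
      - C f.h0 * (X * ∏ k, (C (f.pole k) - X))
      - ∑ k, C (f.delta k) * ∏ j ∈ univ.erase k, (C (f.pole j) - X)) := by
  simp only [downPoly, upPoly, C_sub]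
  ring

theorem natDegree_C_mul_downPoly_sub_upPoly_le (τ : ℝ) :
    (C τ * f.downPoly - f.upPoly).natDegree ≤ f.d + if 0 < f.h0 then 1 else 0 := by
  have hprod := natDegree_prod_fin_C_sub_X_le f.pole
  have hsum := natDegree_le_of_degree_le
    (degree_sum_C_mul_prod_erase_C_sub_X_lt f.pole f.delta).le
  rw [C_mul_downPoly_sub_upPoly]
  refine (natDegree_C_mul_le _ _).trans <| (natDegree_sub_le _ _).trans <|
    max_le ((natDegree_sub_le _ _).trans (max_le ?_ ?_)) (hsum.trans (by omega))
  · exact (natDegree_C_mul_le _ _).trans (hprod.trans (by omega))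
  · split_ifs with hh
    · refine (natDegree_C_mul_le _ _).trans (natDegree_mul_le.trans ?_)
      rw [natDegree_X]
      omega
    · simp [f.h0_eq_zero_of_not_pos hh]

theorem coeff_C_mul_downPoly_sub_upPoly (τ : ℝ) :
    (C τ * f.downPoly - f.upPoly).coeff (f.d + if 0 < f.h0 then 1 else 0)
      = (-1) ^ (f.d + if 0 < f.h0 then 1 else 0) * if 0 < f.h0 then 1 else τ - f.h := by
  have hsum := degree_sum_C_mul_prod_erase_C_sub_X_lt f.pole f.delta
  rw [C_mul_downPoly_sub_upPoly, coeff_C_mul, coeff_sub, coeff_sub]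
  split_ifs with hh
  · rw [coeff_C_mul, coeff_C_mul, coeff_X_mul, coeff_prod_fin_C_sub_X,
      coeff_eq_zero_of_natDegree_lt ((natDegree_prod_fin_C_sub_X_le f.pole).trans_lt (by omega)),
      coeff_eq_zero_of_degree_lt (hsum.trans (by exact_mod_cast Nat.lt_succ_self f.d))]
    linear_combination (-(-1) ^ f.d : ℝ) * f.h0'_mul_h0 hh
  · rw [add_zero, coeff_eq_zero_of_degree_lt hsum, coeff_C_mul, coeff_C_mul,
      coeff_prod_fin_C_sub_X, f.h0_eq_zero_of_not_pos hh, f.h0'_of_not_pos hh]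
    ring

theorem tau_mul_fdown_sub_fup_eq_prod {τ : ℝ} {n : ℕ} (hn : n = f.d + if 0 < f.h0 then 1 else 0)
    {z : Fin n → ℝ} (hz : Function.Injective z) (hpole : ∀ k j, f.pole j ≠ z k)
    (hroot : ∀ k, f.eval (z k) = τ) (x : ℝ) :
    τ * f.fdown x - f.fup x = (if 0 < f.h0 then 1 else τ - f.h) * ∏ k, (z k - x) := by
  subst hn
  have hpoly : C τ * f.downPoly - f.upPoly
      = C (if 0 < f.h0 then 1 else τ - f.h) * ∏ k, (C (z k) - X) := by
    refine eq_of_natDegree_le_of_coeff_eq_of_eval_eq hz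
      (f.natDegree_C_mul_downPoly_sub_upPoly_le τ)
      ((natDegree_C_mul_le _ _).trans (natDegree_prod_fin_C_sub_X_le z)) ?_ fun k => ?_
    · rw [coeff_C_mul_downPoly_sub_upPoly, coeff_C_mul, coeff_prod_fin_C_sub_X, mul_comm]
    · simp [eval_prod, prod_eq_zero (mem_univ k), f.fup_eq_eval_mul_fdown (hpole k), hroot]
  simpa [eval_prod] using congrArg (Polynomial.eval x) hpoly

/-- The derivative of `f↓ (τ - f) = c ∏ (z_j - x)` at the root `z k` of `f = τ`; the sum on the
right is `f′(z k)`. -/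
theorem mul_prod_erase_eq_fdown_mul_deriv {τ c : ℝ} {n : ℕ} {z : Fin n → ℝ}
    (hfac : ∀ x, τ * f.fdown x - f.fup x = c * ∏ k, (z k - x)) {k : Fin n}
    (hk : ∀ j, f.pole j ≠ z k) (hroot : f.eval (z k) = τ) :
    c * ∏ j ∈ univ.erase k, (z j - z k)
      = f.fdown (z k) * (f.h0 + ∑ j, f.delta j / (f.pole j - z k) ^ 2) := by
  have hprod := (hasDerivAt_prod_const_sub z (mem_univ k)).const_mul c
  have hdown : HasDerivAt f.fdown (f.downPoly.derivative.eval (z k)) (z k) := by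
    simpa using f.downPoly.hasDerivAt (z k)
  have hright := hdown.fun_mul ((f.hasDerivAt_eval hk).const_sub τ)
  have heq : (fun x => c * ∏ j, (z j - x)) =ᶠ[𝓝 (z k)] fun x => f.fdown x * (τ - f.eval x) := by
    filter_upwards [eventually_all.2 fun j => eventually_ne_nhds (hk j).symm] with x hx
    rw [← hfac, f.fup_eq_eval_mul_fdown fun j => (hx j).symm]
    ring
  have := hprod.unique (hright.congr_of_eventuallyEq heq)
  rw [hroot, sub_self, mul_zero, zero_add] at this
  linarith

theorem exists_sub_mul_fdown_eq {μ τ c : ℝ} {n : ℕ} (hn : n = f.d + if 0 < f.h0 then 1 else 0)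
    {z : Fin n → ℝ} (hz : Function.Injective z) (hzμ : ∀ k, μ < z k)
    (hpole : ∀ k j, f.pole j ≠ z k) (hroot : ∀ k, f.eval (z k) = τ) (hc : c ≠ 0)
    (hfac : ∀ x, τ * f.fdown x - f.fup x = c * ∏ k, (z k - x)) :
    ∃ (b : ℝ) (δ : Fin n → ℝ), (∀ k, 0 < δ k) ∧ ∀ x, (x - μ) * f.fdown x
      = c * (((if 0 < f.h0 then 0 else c⁻¹) * x + b) * ∏ k, (z k - x)
        + ∑ k, δ k * ∏ j ∈ univ.erase k, (z j - x)) := by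
  set p := C c⁻¹ * (f.downPoly * (X - C μ))
  have hp : p.natDegree ≤ f.d + 1 := (natDegree_C_mul_le _ _).trans <| natDegree_mul_le.trans <|
    add_le_add f.natDegree_downPoly_le (natDegree_X_sub_C_le μ)
  obtain ⟨b, hb⟩ := exists_eq_linear_mul_prod_add_sum hz (hp.trans (by omega))
  have ha : (-1) ^ n * p.coeff (n + 1) = if 0 < f.h0 then 0 else c⁻¹ := by
    subst hn
    split_ifs with hh
    · rw [coeff_eq_zero_of_natDegree_lt (hp.trans_lt (by omega)), mul_zero]
    · rw [add_zero, coeff_C_mul, coeff_mul_X_sub_C, coeff_downPoly,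
        coeff_eq_zero_of_natDegree_lt (f.natDegree_downPoly_le.trans_lt (Nat.lt_succ_self _)),
        f.h0'_of_not_pos hh, one_mul, zero_mul, sub_zero, mul_left_comm, ← mul_pow]
      simp
  have hpx : ∀ x, p.eval x = c⁻¹ * (f.fdown x * (x - μ)) := fun x => by simp [p]
  refine ⟨b, fun k => p.eval (z k) / ∏ j ∈ univ.erase k, (z j - z k), fun k => ?_, fun x => ?_⟩
  · have hf : 0 < f.d ∨ 0 < f.h0 := by
      by_cases hh : 0 < f.h0
      · exact Or.inr hh
      · rw [if_neg hh] at hn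
        exact Or.inl (by have := k.pos; omega)
    -- the residue is `(z k - μ) / f'(z k)`
    dsimp only
    rw [hpx, inv_mul_eq_div, div_div, f.mul_prod_erase_eq_fdown_mul_deriv hfac (hpole k) (hroot k),
      mul_div_mul_left _ _ (f.fdown_ne_zero (hpole k))]
    exact div_pos (sub_pos.2 (hzμ k)) (f.h0_add_sum_div_sq_pos hf (hpole k))
  · have hx := congrArg (Polynomial.eval x) hb
    rw [ha, hpx x] at hx
    simp only [eval_mul, eval_add, eval_sub, eval_X, eval_C, eval_prod, eval_finsetSum] at hx
    rw [← hx]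
    field_simp

theorem exists_theta {μ τ : ℝ} (hμ : f.InGap 0 μ) (hτ : f.eval μ < τ) (ρ : ℝ) :
    ∃ g : RHN, g.index = f.index + 1 ∧
      (∀ x, g.fup x = -ρ * f.fup x + (x - μ + τ * ρ) * f.fdown x) ∧
      (∀ x, g.fdown x = -f.fup x + τ * f.fdown x) := by
  set n := f.d + if 0 < f.h0 then 1 else 0 with hn
  obtain ⟨z, hz, hzroot⟩ := f.exists_strictMono_inGap_roots hμ hτ hn
  have hpole : ∀ k j, f.pole j ≠ z k := fun k => (hzroot k).2.1.pole_ne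
  have hroot : ∀ k, f.eval (z k) = τ := fun k => (hzroot k).2.2
  set c := if 0 < f.h0 then 1 else τ - f.h with hc_def
  have hc : 0 < c := by
    rw [hc_def]
    split_ifs with hh
    exacts [one_pos, sub_pos.2 ((f.h_le_eval hh fun j => (hμ j).2 (Nat.zero_le _)).trans_lt hτ)]
  have hfac := f.tau_mul_fdown_sub_fup_eq_prod hn hz.injective hpole hroot
  rw [← hc_def] at hfac
  obtain ⟨b, δ, hδ, hrep⟩ :=
    f.exists_sub_mul_fdown_eq hn hz.injective (fun k => (hzroot k).1) hpole hroot hc.ne' hfac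
  set a := if 0 < f.h0 then 0 else c⁻¹ with ha_def
  have ha : 0 ≤ a := by
    rw [ha_def]
    split_ifs <;> positivity
  let g : RHN := ⟨n, a, b + ρ, δ, z, ha, hδ, hz⟩
  have hg : g.h0' = c := by
    change (if 0 < a then 1 / a else 1) = c
    by_cases hh : 0 < f.h0
    · simp [ha_def, hc_def, hh]
    · simp [ha_def, hh, hc]
  refine ⟨g, ?_, fun x => ?_, fun x => ?_⟩
  · change 2 * (n : ℤ) + (if 0 < a then 1 else 0) = 2 * f.d + (if 0 < f.h0 then 1 else 0) + 1
    by_cases hh : 0 < f.h0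
    · simp [hn, ha_def, hh]
      ring
    · simp [hn, ha_def, hh, hc]
  · change g.h0' * ((a * x + (b + ρ)) * ∏ k, (z k - x)
      + ∑ k, δ k * ∏ j ∈ univ.erase k, (z j - x)) = _
    rw [hg]
    linear_combination -hrep x - ρ * hfac x
  · change g.h0' * ∏ k, (z k - x) = _
    rw [hg, ← hfac x]
    ring

variable {f}

theorem isTheta_some_some {μ τ ρ : ℝ} {g : RHN} (hτ : f.eval μ < τ)
    (hup : ∀ x, g.fup x = -ρ * f.fup x + (x - μ + τ * ρ) * f.fdown x)
    (hdown : ∀ x, g.fdown x = -f.fup x + τ * f.fdown x) :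
    IsTheta μ τ ρ (some f) (some g) := by
  refine ⟨fun h => hτ.ne (h μ), fun x hfx hx hgx => ?_⟩
  have key : (g.eval x - ρ) * (f.eval x - τ) * f.fdown x = (μ - x) * f.fdown x := by
    have h := hup x
    rw [g.fup_eq_eval_mul_fdown (g.pole_ne_of_fdown_ne_zero hgx), hdown x,
      f.fup_eq_eval_mul_fdown (f.pole_ne_of_fdown_ne_zero hfx)] at h
    linear_combination -h
  rw [← mul_right_cancel₀ hfx key, mul_div_cancel_right₀ _ (sub_ne_zero.2 hx)]
  ring

end RHN

/-- If `μ < π̊(f)` and `τ > f(μ)` (when `f ≠ ∞`; for `f = ∞` there is no condition), then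
`f̂ = Θ(μ,τ,ρ,f)` is a rational Herglotz–Nevanlinna function, `ind f̂ = ind f + 1`, and
`f̂↑(λ) = −ρ f↑(λ) + (λ−μ+τρ) f↓(λ)`, `f̂↓(λ) = −f↑(λ) + τ f↓(λ)`. -/
theorem theta_increases_index
    (f : BC) (mu tau rho : ℝ)
    (hmu : (mu : EReal) < BC.mpole f)
    (htau : ∀ f' : RHN, f = some f' → f'.eval mu < tau) :
    ∃ g : RHN, IsTheta mu tau rho f (some g) ∧
      g.index = BC.index f + 1 ∧
      (∀ x : ℝ, g.fup x = -rho * BC.fup f x + (x - mu + tau * rho) * BC.fdown f x) ∧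
      (∀ x : ℝ, g.fdown x = -(BC.fup f x) + tau * BC.fdown f x) := by
  cases f with
  | none =>
    refine ⟨RHN.const rho, ⟨rfl, rfl, rfl⟩, ?_, fun x => ?_, fun x => ?_⟩ <;>
      simp [BC.index, BC.fup, BC.fdown]
  | some f =>
    have htau' := htau f rfl
    obtain ⟨g, hindex, hup, hdown⟩ :=
      f.exists_theta (RHN.inGap_zero_of_coe_lt_mpole hmu) htau' rho
    exact ⟨g, RHN.isTheta_some_some htau' hup hdown, hindex, hup, hdown⟩
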